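/- For every integer p ≥ 1 there exist real numbers δ_0, …, δ_{p−1} with |δ_ℓ| ≤ 1 for all ℓ, such that for every smooth u : ℝ × ℝ² → ℝ the commutator satisfies, pointwise on ℝ × ℝ²: [X₁, R^p_φ] u = − X₁ ( Σ_{ℓ=0}^{p−1} δ_ℓ · R^{p−ℓ−1}_{φ^{(ℓ+1)}} u ), where R^{q}_{φ^{(m)}} denotes the localized operator built from the radial function φ^{(m)} = R^m φ in place of φ. -/

import Mathlib

noncomputable section

/-- Partial derivative in `t` of a function on `ℝ × ℝ²`. -/
def pt (u : ℝ × ℝ × ℝ → ℝ) (p : ℝ × ℝ × ℝ) : ℝ :=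
  deriv (fun s => u (s, p.2.1, p.2.2)) p.1

/-- Partial derivative in `x₁`. -/
def px1 (u : ℝ × ℝ × ℝ → ℝ) (p : ℝ × ℝ × ℝ) : ℝ :=
  deriv (fun s => u (p.1, s, p.2.2)) p.2.1

/-- Partial derivative in `x₂`. -/
def px2 (u : ℝ × ℝ × ℝ → ℝ) (p : ℝ × ℝ × ℝ) : ℝ :=
  deriv (fun s => u (p.1, p.2.1, s)) p.2.2

/-- `X₁ u = ∂ₜ u`. -/
def X1 (u : ℝ × ℝ × ℝ → ℝ) : ℝ × ℝ × ℝ → ℝ := pt u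

/-- `R u = x₁ ∂_{x₁} u + x₂ ∂_{x₂} u`. -/
def Rop (u : ℝ × ℝ × ℝ → ℝ) : ℝ × ℝ × ℝ → ℝ :=
  fun p => p.2.1 * px1 u p + p.2.2 * px2 u p

/-- `X₂ u = x₁ ∂_{x₂} u - x₂ ∂_{x₁} u + tᵏ · R u`. -/
def X2 (k : ℕ) (u : ℝ × ℝ × ℝ → ℝ) : ℝ × ℝ × ℝ → ℝ :=
  fun p => p.2.1 * px2 u p - p.2.2 * px1 u p + p.1 ^ k * Rop u p

/-- `M u = (t/k) ∂ₜ u`. -/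
def M (k : ℕ) (u : ℝ × ℝ × ℝ → ℝ) : ℝ × ℝ × ℝ → ℝ :=
  fun p => (p.1 / (k : ℝ)) * pt u p

end

noncomputable section

/-- `a j ℓ` is the coefficient of `T^(j-ℓ)` in `Q^(j+1)`, where
`Q = T/(eᵀ - 1)` is the Bernoulli generating power series (with `B₁ = -1/2`). -/
def bernCoef (j ℓ : ℕ) : ℚ :=
  PowerSeries.coeff (j - ℓ) ((bernoulliPowerSeries ℚ) ^ (j + 1))

/-- `N_j u = Σ_{j'=0}^{j} a^j_{j'} · M^{j'} u / j'!`. -/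
def Nop (k j : ℕ) (u : ℝ × ℝ × ℝ → ℝ) : ℝ × ℝ × ℝ → ℝ :=
  fun p => ∑ j' ∈ Finset.range (j + 1),
    ((bernCoef j j' : ℝ) / (Nat.factorial j' : ℝ)) * ((M k)^[j'] u p)

end

/-- The localized operator `R^p_φ u = Σ_{j=0}^{p} φ^{(j)} · N_j(R^{p-j} u)`, where
`φ^{(j)} = R^j φ`. -/
noncomputable def RpLoc (k p : ℕ) (φ u : ℝ × ℝ × ℝ → ℝ) : ℝ × ℝ × ℝ → ℝ :=
  fun q => ∑ j ∈ Finset.range (p + 1), (Rop^[j] φ q) * (Nop k j (Rop^[p - j] u) q)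

section Auxiliary
open PowerSeries Finset
noncomputable section

namespace BX

def Eser (z : ℚ) : PowerSeries ℚ := PowerSeries.rescale z (PowerSeries.exp ℚ)
def dq (z : ℚ) (ℓ : ℕ) : ℚ := (Polynomial.eval z (descPochhammer ℚ (ℓ+1))) / (Nat.factorial (ℓ+1))
def del (k : ℕ) (ℓ : ℕ) : ℝ := ((dq (-(1/(k:ℚ))) ℓ : ℚ) : ℝ)

lemma coeff_Eser (z : ℚ) (n : ℕ) : coeff n (Eser z) = z ^ n / n.factorial := by
  simp [Eser, coeff_rescale, coeff_exp, algebraMap]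
  ring

lemma coeff_pow_eq_zero {f : PowerSeries ℚ} (hf : constantCoeff f = 0) :
    ∀ r n : ℕ, n < r → coeff n (f ^ r) = 0 := by
  intro r
  induction r with
  | zero => intro n hn; omega
  | succ r ih =>
    intro n hn
    rw [pow_succ, coeff_mul]
    apply Finset.sum_eq_zero
    rintro ⟨a, b⟩ hab
    rw [Finset.HasAntidiagonal.mem_antidiagonal] at hab
    rcases lt_or_ge a r with h | h
    · simp [ih a h]
    · have hb : b = 0 := by omega
      have ha : a = n := by omega
      subst hb
      simp [coeff_zero_eq_constantCoeff, hf]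

lemma mul_coeff_zero (f g : PowerSeries ℚ) (n : ℕ) (hg : ∀ j ≤ n, coeff j g = 0) :
    coeff n (f * g) = 0 := by
  rw [coeff_mul]
  apply Finset.sum_eq_zero
  rintro ⟨a, b⟩ hab
  rw [Finset.HasAntidiagonal.mem_antidiagonal] at hab
  simp [hg b (by omega)]

lemma descPoch_eval_nat (r N : ℕ) :
    Polynomial.eval ((N : ℚ)) (descPochhammer ℚ r) = (r.factorial : ℚ) * (N.choose r) := by
  rw [descPochhammer_eval_eq_descFactorial, Nat.descFactorial_eq_factorial_mul_choose]
  push_cast; ring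

/-- binomial expansion of `exp^N` in terms of `(exp - 1)` powers, coefficientwise -/
lemma coeff_sum_choose (N m n : ℕ) (hn : n ≤ m) :
    coeff n (∑ r ∈ range (m+1), (N.choose r : ℚ) • ((exp ℚ - 1) ^ r))
      = coeff n (Eser (N : ℚ)) := by
  have hconst : constantCoeff (exp ℚ - 1) = 0 := by simp [constantCoeff_exp]
  have hexp : (Eser (N : ℚ)) = ∑ r ∈ range (N+1), (N.choose r : ℚ) • ((exp ℚ - 1) ^ r) := by
    rw [Eser, ← exp_pow_eq_rescale_exp]
    have : exp ℚ = (exp ℚ - 1) + 1 := by ring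
    rw [this, add_pow]
    apply Finset.sum_congr rfl
    intro r _; rw [smul_eq_C_mul, map_natCast]; push_cast; ring
  rw [hexp, map_sum, map_sum]
  rcases le_total (m+1) (N+1) with h | h
  · apply Finset.sum_subset (by exact Finset.range_subset_range.mpr h)
    intro r hr hnr
    simp only [Finset.mem_range] at hr hnr
    rw [map_smul, coeff_pow_eq_zero hconst r n (by omega)]
    simp
  · symm
    apply Finset.sum_subset (by exact Finset.range_subset_range.mpr h)
    intro r hr hnr
    simp only [Finset.mem_range] at hr hnr
    rw [Nat.choose_eq_zero_of_lt (by omega)]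
    simp

lemma lemA (m n : ℕ) (hn : n ≤ m) (z : ℚ) :
    coeff n (∑ ℓ ∈ range m, dq z ℓ • ((exp ℚ - 1) ^ (ℓ+1))) = coeff n (Eser z - 1) := by
  -- polynomial identity
  set P : Polynomial ℚ := ∑ ℓ ∈ range m,
    Polynomial.C (coeff n ((exp ℚ - 1) ^ (ℓ+1)) / ((ℓ+1).factorial : ℚ)) *
      descPochhammer ℚ (ℓ+1) with hP
  set Q : Polynomial ℚ := Polynomial.C ((n.factorial : ℚ)⁻¹) * Polynomial.X ^ n
      - Polynomial.C (coeff n (1 : PowerSeries ℚ)) with hQ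
  have hPQ : P = Q := by
    apply Polynomial.eq_of_infinite_eval_eq
    apply Set.Infinite.mono (s := Set.range (Nat.cast : ℕ → ℚ))
    · rintro _ ⟨N, rfl⟩
      simp only [Set.mem_setOf_eq, hP, hQ, Polynomial.eval_finset_sum, Polynomial.eval_mul,
        Polynomial.eval_C, Polynomial.eval_sub, Polynomial.eval_pow, Polynomial.eval_X]
      have : ∀ ℓ ∈ range m,
          coeff n ((exp ℚ - 1) ^ (ℓ+1)) / ((ℓ+1).factorial : ℚ) *
            Polynomial.eval ((N:ℚ)) (descPochhammer ℚ (ℓ+1))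
          = coeff n ((N.choose (ℓ+1) : ℚ) • ((exp ℚ - 1) ^ (ℓ+1))) := by
        intro ℓ _
        rw [descPoch_eval_nat, map_smul]
        have : (((ℓ+1).factorial : ℚ)) ≠ 0 := by positivity
        field_simp
        ring
      rw [Finset.sum_congr rfl this, ← map_sum]
      have hshift : (∑ ℓ ∈ range m, (N.choose (ℓ+1) : ℚ) • ((exp ℚ - 1) ^ (ℓ+1)))
          = (∑ r ∈ range (m+1), (N.choose r : ℚ) • ((exp ℚ - 1) ^ r)) - 1 := by
        rw [Finset.sum_range_succ']
        simp
      rw [hshift, map_sub, coeff_sum_choose N m n hn, coeff_Eser]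
      rw [div_eq_mul_inv]
      ring
    · exact Set.infinite_range_of_injective Nat.cast_injective
  have := congrArg (Polynomial.eval z) hPQ
  simp only [hP, hQ, Polynomial.eval_finset_sum, Polynomial.eval_mul, Polynomial.eval_C,
    Polynomial.eval_sub, Polynomial.eval_pow, Polynomial.eval_X] at this
  rw [map_sum, map_sub]
  calc ∑ ℓ ∈ range m, coeff n (dq z ℓ • ((exp ℚ - 1) ^ (ℓ+1)))
      = ∑ ℓ ∈ range m, coeff n ((exp ℚ - 1) ^ (ℓ+1)) / ((ℓ+1).factorial : ℚ) *
          Polynomial.eval z (descPochhammer ℚ (ℓ+1)) := by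
        apply Finset.sum_congr rfl
        intro ℓ _
        rw [map_smul, dq]
        simp [smul_eq_mul]
        ring
    _ = (n.factorial : ℚ)⁻¹ * z ^ n - coeff n (1 : PowerSeries ℚ) := this
    _ = coeff n (Eser z) - coeff n (1 : PowerSeries ℚ) := by
        rw [coeff_Eser]; ring

lemma Glemma (y : ℚ) (j i : ℕ) (h : i ≤ j) :
    ∑ j' ∈ range (j+1), bernCoef j j' / (j'.factorial : ℚ) * (j'.choose i) * (i.factorial : ℚ)
        * y^(j'-i)
      = coeff (j - i) ((bernoulliPowerSeries ℚ)^(j+1) * Eser y) := by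
  rw [mul_comm, coeff_mul, Finset.Nat.sum_antidiagonal_eq_sum_range_succ_mk]
  have hL : ∑ j' ∈ range (j+1), bernCoef j j' / (j'.factorial : ℚ) * (j'.choose i)
        * (i.factorial : ℚ) * y^(j'-i)
      = ∑ j' ∈ Ico i (j+1), bernCoef j j' / (j'.factorial : ℚ) * (j'.choose i)
        * (i.factorial : ℚ) * y^(j'-i) := by
    symm
    apply Finset.sum_subset
    · intro x hx; simp only [Finset.mem_Ico, Finset.mem_range] at *; omega
    · intro x hx hnx
      simp only [Finset.mem_Ico, Finset.mem_range] at hx hnx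
      have : x < i := by omega
      rw [Nat.choose_eq_zero_of_lt this]
      simp
  rw [hL, Finset.sum_Ico_eq_sum_range]
  have hrange : j + 1 - i = j - i + 1 := by omega
  rw [hrange]
  apply Finset.sum_congr rfl
  intro b hb
  simp only [Finset.mem_range] at hb
  rw [coeff_Eser, bernCoef]
  have h1 : j - (i + b) = j - i - b := by omega
  have h2 : i + b - i = b := by omega
  have h3 : ((i+b).choose i : ℚ) * (i.factorial : ℚ) / ((i+b).factorial : ℚ) = 1 / (b.factorial : ℚ) := by
    have := Nat.add_choose_mul_factorial_mul_factorial i b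
    have hb1 : ((i+b).factorial : ℚ) ≠ 0 := by positivity
    have hb2 : ((b).factorial : ℚ) ≠ 0 := by positivity
    field_simp
    have hcs : (i+b).choose i = (i+b).choose b := by
      rw [← Nat.choose_symm (Nat.le_add_left b i)]
      congr 1
      omega
    rw [hcs]
    exact_mod_cast this
  rw [h1, h2]
  show (coeff (j-i-b)) (bernoulliPowerSeries ℚ ^ (j+1)) / ((i+b).factorial:ℚ)
        * (((i+b).choose i :ℕ):ℚ) * (i.factorial:ℚ) * y ^ b
      = y ^ b / (b.factorial:ℚ) * (coeff (j-i-b)) (bernoulliPowerSeries ℚ ^ (j+1))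
  rw [show (coeff (j-i-b)) (bernoulliPowerSeries ℚ ^ (j+1)) / ((i+b).factorial:ℚ)
        * (((i+b).choose i :ℕ):ℚ) * (i.factorial:ℚ) * y ^ b
      = (coeff (j-i-b)) (bernoulliPowerSeries ℚ ^ (j+1))
        * ((((i+b).choose i:ℕ):ℚ) * (i.factorial:ℚ) / ((i+b).factorial:ℚ)) * y^b from by ring, h3]
  ring

lemma Eser_mul_Eser_neg (y : ℚ) : Eser (-y) * Eser y = 1 := by
  rw [Eser, Eser, exp_mul_exp_eq_exp_add, neg_add_cancel, rescale_zero]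
  simp [constantCoeff_exp]

lemma coeff_S_zero (y : ℚ) (m n : ℕ) (hn : n ≤ m) :
    coeff n ((bernoulliPowerSeries ℚ)^(m+1) *
      (Eser y - 1 + (∑ ℓ ∈ range m, dq (-y) ℓ • ((exp ℚ - 1) ^ (ℓ+1))) * Eser y)) = 0 := by
  set Err : PowerSeries ℚ :=
    (∑ ℓ ∈ range m, dq (-y) ℓ • ((exp ℚ - 1) ^ (ℓ+1))) - (Eser (-y) - 1) with hErr
  have hErrCoeff : ∀ j ≤ m, coeff j Err = 0 := by
    intro j hj
    rw [hErr, map_sub, lemA m j hj (-y), sub_self]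
  have hfact : (bernoulliPowerSeries ℚ)^(m+1) *
      (Eser y - 1 + (∑ ℓ ∈ range m, dq (-y) ℓ • ((exp ℚ - 1) ^ (ℓ+1))) * Eser y)
      = ((bernoulliPowerSeries ℚ)^(m+1) * Eser y) * Err := by
    have hsum : (∑ ℓ ∈ range m, dq (-y) ℓ • ((exp ℚ - 1) ^ (ℓ+1))) = Err + (Eser (-y) - 1) := by
      rw [hErr]; ring
    rw [hsum]
    have h2 := Eser_mul_Eser_neg y
    linear_combination ((bernoulliPowerSeries ℚ) ^ (m+1)) * h2
  rw [hfact]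
  exact mul_coeff_zero _ _ n (fun j hj => hErrCoeff j (le_trans hj hn))

lemma KEYQ (y : ℚ) (m i : ℕ) (hm : 1 ≤ m) (hi : i ≤ m) :
    (∑ j' ∈ range (m+1), bernCoef m j' / (j'.factorial:ℚ) * (j'.choose i) * y^(j'-i))
      - bernCoef m i / (i.factorial:ℚ)
    = -∑ ℓ ∈ range m, dq (-y) ℓ *
        ∑ j' ∈ range (m-ℓ), bernCoef (m-1-ℓ) j' / (j'.factorial:ℚ) * (j'.choose i) * y^(j'-i) := by
  have hS := coeff_S_zero y m (m-i) (by omega)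
  set B := bernoulliPowerSeries ℚ with hB
  have hrw : (B^(m+1)) * (Eser y - 1 + (∑ ℓ ∈ range m, dq (-y) ℓ • ((exp ℚ - 1) ^ (ℓ+1))) * Eser y)
      = B^(m+1) * Eser y - B^(m+1)
        + ∑ ℓ ∈ range m, dq (-y) ℓ • (B^(m+1) * ((exp ℚ - 1) ^ (ℓ+1) * Eser y)) := by
    rw [mul_add, mul_sub, mul_one, Finset.sum_mul, Finset.mul_sum]
    congr 1
    apply Finset.sum_congr rfl
    intro a _
    simp only [smul_mul_assoc, mul_smul_comm, mul_assoc]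
  rw [hrw] at hS
  simp only [map_add, map_sub, map_sum, map_smul, smul_eq_mul] at hS
  -- identify the three pieces
  have hA : coeff (m-i) (B^(m+1) * Eser y)
      = (∑ j' ∈ range (m+1), bernCoef m j' / (j'.factorial:ℚ) * (j'.choose i) * y^(j'-i))
        * (i.factorial:ℚ) := by
    rw [← Glemma y m i hi, Finset.sum_mul]
    apply Finset.sum_congr rfl
    intro j' _
    ring
  have hBt : coeff (m-i) (B^(m+1)) = bernCoef m i := rfl
  have hC : ∀ ℓ ∈ range m, coeff (m-i) (B^(m+1) * ((exp ℚ - 1) ^ (ℓ+1) * Eser y))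
      = (∑ j' ∈ range (m-ℓ), bernCoef (m-1-ℓ) j' / (j'.factorial:ℚ) * (j'.choose i) * y^(j'-i))
        * (i.factorial:ℚ) := by
    intro ℓ hℓ
    simp only [Finset.mem_range] at hℓ
    have hBX : B^(m+1) * ((exp ℚ - 1) ^ (ℓ+1) * Eser y)
        = (X : PowerSeries ℚ)^(ℓ+1) * (B^(m-ℓ) * Eser y) := by
      calc B^(m+1) * ((exp ℚ - 1) ^ (ℓ+1) * Eser y)
          = (B * (exp ℚ - 1))^(ℓ+1) * (B^(m-ℓ) * Eser y) := by
            rw [mul_pow, show m+1 = (ℓ+1)+(m-ℓ) from by omega, pow_add]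
            ring
        _ = (X : PowerSeries ℚ)^(ℓ+1) * (B^(m-ℓ) * Eser y) := by
            rw [hB, bernoulliPowerSeries_mul_exp_sub_one]
    rw [hBX, coeff_X_pow_mul']
    by_cases hcase : ℓ + 1 ≤ m - i
    · rw [if_pos hcase]
      have hmℓ : m - ℓ = (m-1-ℓ) + 1 := by omega
      have hidx : m - i - (ℓ+1) = (m-1-ℓ) - i := by omega
      rw [hmℓ, hidx, ← Glemma y (m-1-ℓ) i (by omega), Finset.sum_mul]
      rw [show (m-1-ℓ) + 1 = m - ℓ from by omega]
      apply Finset.sum_congr rfl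
      intro j' _
      ring
    · rw [if_neg hcase]
      symm
      rw [Finset.sum_eq_zero, zero_mul]
      intro j' hj'
      simp only [Finset.mem_range] at hj'
      rw [Nat.choose_eq_zero_of_lt (by omega : j' < i)]
      simp
  have hCsum : (∑ ℓ ∈ range m, dq (-y) ℓ * coeff (m-i) (B^(m+1) * ((exp ℚ - 1) ^ (ℓ+1) * Eser y)))
      = ∑ ℓ ∈ range m, dq (-y) ℓ *
          ((∑ j' ∈ range (m-ℓ), bernCoef (m-1-ℓ) j' / (j'.factorial:ℚ) * (j'.choose i) * y^(j'-i))
            * (i.factorial:ℚ)) :=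
    Finset.sum_congr rfl (fun ℓ hℓ => by rw [hC ℓ hℓ])
  rw [hA, hBt, hCsum] at hS
  have hfac : ((i.factorial : ℚ)) ≠ 0 := by positivity
  apply mul_right_cancel₀ hfac
  have hsum : ∑ ℓ ∈ range m, dq (-y) ℓ *
      ((∑ j' ∈ range (m-ℓ), bernCoef (m-1-ℓ) j' / (j'.factorial:ℚ) * (j'.choose i) * y^(j'-i))
        * (i.factorial:ℚ))
      = (∑ ℓ ∈ range m, dq (-y) ℓ *
          ∑ j' ∈ range (m-ℓ), bernCoef (m-1-ℓ) j' / (j'.factorial:ℚ) * (j'.choose i) * y^(j'-i))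
        * (i.factorial:ℚ) := by
    rw [Finset.sum_mul]
    apply Finset.sum_congr rfl
    intro ℓ _
    ring
  rw [hsum] at hS
  have hbi : bernCoef m i = bernCoef m i / (i.factorial:ℚ) * (i.factorial:ℚ) := by
    field_simp
  rw [hbi] at hS
  linear_combination hS

lemma KEYR (k : ℕ) (hk : 2 ≤ k) (m i : ℕ) (hm : 1 ≤ m) (hi : i ≤ m) :
    (∑ j' ∈ range (m+1), ((bernCoef m j' : ℝ) / (j'.factorial:ℝ)) * (j'.choose i)
        * (1/(k:ℝ))^(j'-i))
      - (bernCoef m i : ℝ) / (i.factorial:ℝ)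
    = -∑ ℓ ∈ range m, del k ℓ *
        ∑ j' ∈ range (m-ℓ), ((bernCoef (m-1-ℓ) j' : ℝ) / (j'.factorial:ℝ)) * (j'.choose i)
          * (1/(k:ℝ))^(j'-i) := by
  have h := KEYQ (1/(k:ℚ)) m i hm hi
  have := congrArg (fun q : ℚ => (q : ℝ)) h
  push_cast at this
  simp only [del]
  push_cast
  convert this using 2 <;> norm_num
  
lemma del_abs_le (k : ℕ) (hk : 2 ≤ k) (ℓ : ℕ) : |del k ℓ| ≤ 1 := by
  have hk0 : (0:ℚ) < (k:ℚ) := by positivity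
  set y : ℚ := 1/(k:ℚ) with hy
  have hy0 : 0 < y := by positivity
  have hy1 : y ≤ 1 := by
    rw [hy, div_le_one hk0]
    exact_mod_cast by omega
  have habs : ∀ r : ℕ, 1 ≤ r → |Polynomial.eval (-y) (descPochhammer ℚ r)| ≤ (r.factorial : ℚ) * y := by
    intro r hr
    induction r with
    | zero => omega
    | succ r ih =>
      rcases Nat.eq_or_lt_of_le hr with h1 | h1
      · simp only [← h1]
        norm_num [descPochhammer]
        rw [abs_of_pos hy0]
      · have hr1 : 1 ≤ r := by omega
        have := ih hr1
        rw [descPochhammer_succ_eval, abs_mul]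
        have hrpos : (0:ℚ) ≤ (r:ℚ) := by positivity
        have h2 : |(-y - (r:ℚ))| = y + r := by
          rw [abs_of_neg (by linarith)]
          ring
        rw [h2]
        calc |Polynomial.eval (-y) (descPochhammer ℚ r)| * (y + r)
            ≤ ((r.factorial:ℚ) * y) * (y + r) :=
              mul_le_mul_of_nonneg_right this (by positivity)
          _ ≤ ((r.factorial:ℚ) * y) * (1 + r) :=
              mul_le_mul_of_nonneg_left (by linarith) (by positivity)
          _ = ((r+1).factorial : ℚ) * y := by
              rw [Nat.factorial_succ]
              push_cast
              ring
  have hd : |dq (-y) ℓ| ≤ 1 := by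
    rw [dq, abs_div]
    have hf : |((ℓ+1).factorial : ℚ)| = ((ℓ+1).factorial : ℚ) := abs_of_pos (by positivity)
    rw [hf, div_le_one (by positivity)]
    calc |Polynomial.eval (-y) (descPochhammer ℚ (ℓ+1))| ≤ ((ℓ+1).factorial : ℚ) * y :=
          habs (ℓ+1) (by omega)
      _ ≤ ((ℓ+1).factorial : ℚ) * 1 := mul_le_mul_of_nonneg_left hy1 (by positivity)
      _ = ((ℓ+1).factorial : ℚ) := by ring
  rw [del, ← Rat.cast_abs]
  exact_mod_cast hd



abbrev E3 := ℝ × ℝ × ℝ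


def e1 : E3 := (1, 0, 0)
def e2 : E3 := (0, 1, 0)
def e3 : E3 := (0, 0, 1)

lemma hasDerivAt_sect_t {u : E3 → ℝ} (hu : Differentiable ℝ u) (t a b : ℝ) :
    HasDerivAt (fun s => u (s, a, b)) (fderiv ℝ u (t, a, b) e1) t := by
  have hc : HasDerivAt (fun s : ℝ => ((s, a, b) : E3)) e1 t := by
    exact (hasDerivAt_id t).prodMk (hasDerivAt_const t ((a, b) : ℝ × ℝ))
  exact (hu (t, a, b)).hasFDerivAt.comp_hasDerivAt t hc

lemma hasDerivAt_sect_x1 {u : E3 → ℝ} (hu : Differentiable ℝ u) (t a b : ℝ) :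
    HasDerivAt (fun s => u (t, s, b)) (fderiv ℝ u (t, a, b) e2) a := by
  have hc : HasDerivAt (fun s : ℝ => ((t, s, b) : E3)) e2 a :=
    (hasDerivAt_const a t).prodMk ((hasDerivAt_id a).prodMk (hasDerivAt_const a b))
  exact (hu (t, a, b)).hasFDerivAt.comp_hasDerivAt a hc

lemma hasDerivAt_sect_x2 {u : E3 → ℝ} (hu : Differentiable ℝ u) (t a b : ℝ) :
    HasDerivAt (fun s => u (t, a, s)) (fderiv ℝ u (t, a, b) e3) b := by
  have hc : HasDerivAt (fun s : ℝ => ((t, a, s) : E3)) e3 b :=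
    (hasDerivAt_const b t).prodMk ((hasDerivAt_const b a).prodMk (hasDerivAt_id b))
  exact (hu (t, a, b)).hasFDerivAt.comp_hasDerivAt b hc

lemma pt_eq {u : E3 → ℝ} (hu : Differentiable ℝ u) (p : E3) :
    pt u p = fderiv ℝ u p e1 := by
  obtain ⟨t, a, b⟩ := p
  exact (hasDerivAt_sect_t hu t a b).deriv

lemma px1_eq {u : E3 → ℝ} (hu : Differentiable ℝ u) (p : E3) :
    px1 u p = fderiv ℝ u p e2 := by
  obtain ⟨t, a, b⟩ := p
  exact (hasDerivAt_sect_x1 hu t a b).deriv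

lemma px2_eq {u : E3 → ℝ} (hu : Differentiable ℝ u) (p : E3) :
    px2 u p = fderiv ℝ u p e3 := by
  obtain ⟨t, a, b⟩ := p
  exact (hasDerivAt_sect_x2 hu t a b).deriv

lemma contDiff_dv {u : E3 → ℝ} (hu : ContDiff ℝ (⊤ : ℕ∞) u) (v : E3) :
    ContDiff ℝ (⊤ : ℕ∞) (fun p => fderiv ℝ u p v) := by
  exact (ContinuousLinearMap.apply ℝ ℝ v).contDiff.comp (hu.fderiv_right (by simp))

lemma contDiff_pt {u : E3 → ℝ} (hu : ContDiff ℝ (⊤ : ℕ∞) u) : ContDiff ℝ (⊤ : ℕ∞) (pt u) := by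
  have : pt u = fun p => fderiv ℝ u p e1 := funext (pt_eq (hu.differentiable (by simp)))
  rw [this]; exact contDiff_dv hu e1

lemma contDiff_px1 {u : E3 → ℝ} (hu : ContDiff ℝ (⊤ : ℕ∞) u) : ContDiff ℝ (⊤ : ℕ∞) (px1 u) := by
  have : px1 u = fun p => fderiv ℝ u p e2 := funext (px1_eq (hu.differentiable (by simp)))
  rw [this]; exact contDiff_dv hu e2

lemma contDiff_px2 {u : E3 → ℝ} (hu : ContDiff ℝ (⊤ : ℕ∞) u) : ContDiff ℝ (⊤ : ℕ∞) (px2 u) := by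
  have : px2 u = fun p => fderiv ℝ u p e3 := funext (px2_eq (hu.differentiable (by simp)))
  rw [this]; exact contDiff_dv hu e3

/-- Clairaut for directional derivatives -/
lemma dv_comm {u : E3 → ℝ} (hu : ContDiff ℝ (⊤ : ℕ∞) u) (p : E3) (v w : E3) :
    fderiv ℝ (fun q => fderiv ℝ u q w) p v = fderiv ℝ (fun q => fderiv ℝ u q v) p w := by
  have hF : ContDiff ℝ (⊤ : ℕ∞) (fderiv ℝ u) := hu.fderiv_right (by simp)
  have hf : ∀ y, HasFDerivAt u (fderiv ℝ u y) y := fun y =>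
    ((hu.differentiable (by simp)) y).hasFDerivAt
  have hx : HasFDerivAt (fderiv ℝ u) (fderiv ℝ (fderiv ℝ u) p) p :=
    ((hF.differentiable (by simp)) p).hasFDerivAt
  have hsym := second_derivative_symmetric hf hx v w
  have hav : ∀ z : E3, fderiv ℝ (fun q => fderiv ℝ u q z) p = (ContinuousLinearMap.apply ℝ ℝ z).comp (fderiv ℝ (fderiv ℝ u) p) := by
    intro z
    exact ((ContinuousLinearMap.apply ℝ ℝ z).hasFDerivAt.comp p hx).fderiv
  rw [hav w, hav v]
  simpa using hsym

lemma pt_px1_comm {u : E3 → ℝ} (hu : ContDiff ℝ (⊤ : ℕ∞) u) (p : E3) :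
    pt (px1 u) p = px1 (pt u) p := by
  have hd := hu.differentiable (by simp)
  have h1 : px1 u = fun q => fderiv ℝ u q e2 := funext (px1_eq hd)
  have h2 : pt u = fun q => fderiv ℝ u q e1 := funext (pt_eq hd)
  rw [pt_eq ((contDiff_px1 hu).differentiable (by simp)) p,
      px1_eq ((contDiff_pt hu).differentiable (by simp)) p, h1, h2]
  exact dv_comm hu p e1 e2

lemma pt_px2_comm {u : E3 → ℝ} (hu : ContDiff ℝ (⊤ : ℕ∞) u) (p : E3) :
    pt (px2 u) p = px2 (pt u) p := by
  have hd := hu.differentiable (by simp)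
  have h1 : px2 u = fun q => fderiv ℝ u q e3 := funext (px2_eq hd)
  have h2 : pt u = fun q => fderiv ℝ u q e1 := funext (pt_eq hd)
  rw [pt_eq ((contDiff_px2 hu).differentiable (by simp)) p,
      px2_eq ((contDiff_pt hu).differentiable (by simp)) p, h1, h2]
  exact dv_comm hu p e1 e3

lemma contDiff_coord1 : ContDiff ℝ (⊤:ℕ∞) (fun p : E3 => p.1) := contDiff_fst
lemma contDiff_Rop {u : E3 → ℝ} (hu : ContDiff ℝ (⊤ : ℕ∞) u) : ContDiff ℝ (⊤ : ℕ∞) (Rop u) := by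
  exact ((contDiff_snd.fst).mul (contDiff_px1 hu)).add ((contDiff_snd.snd).mul (contDiff_px2 hu))

lemma contDiff_M {k : ℕ} {u : E3 → ℝ} (hu : ContDiff ℝ (⊤ : ℕ∞) u) : ContDiff ℝ (⊤ : ℕ∞) (M k u) := by
  exact ((contDiff_fst).div_const _).mul (contDiff_pt hu)

lemma contDiff_Rop_iter {u : E3 → ℝ} (hu : ContDiff ℝ (⊤ : ℕ∞) u) (n : ℕ) :
    ContDiff ℝ (⊤ : ℕ∞) (Rop^[n] u) := by
  induction n with
  | zero => exact hu
  | succ n ih => rw [Function.iterate_succ_apply']; exact contDiff_Rop ih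

lemma contDiff_M_iter {k : ℕ} {u : E3 → ℝ} (hu : ContDiff ℝ (⊤ : ℕ∞) u) (n : ℕ) :
    ContDiff ℝ (⊤ : ℕ∞) ((M k)^[n] u) := by
  induction n with
  | zero => exact hu
  | succ n ih => rw [Function.iterate_succ_apply']; exact contDiff_M ih


lemma hdt {f : E3 → ℝ} (hf : ContDiff ℝ (⊤ : ℕ∞) f) (t a b : ℝ) :
    HasDerivAt (fun s => f (s, a, b)) (pt f (t, a, b)) t := by
  have := hasDerivAt_sect_t (hf.differentiable (by simp)) t a b
  rwa [← pt_eq (hf.differentiable (by simp)) (t, a, b)] at this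

/-- pt of a finite linear combination of smooth functions -/
lemma pt_sum {ι : Type*} (s : Finset ι) (c : ι → ℝ) (f : ι → E3 → ℝ)
    (hf : ∀ i ∈ s, ContDiff ℝ (⊤ : ℕ∞) (f i)) (p : E3) :
    pt (fun q => ∑ i ∈ s, c i * f i q) p = ∑ i ∈ s, c i * pt (f i) p := by
  obtain ⟨t, a, b⟩ := p
  have h : HasDerivAt (fun x => ∑ i ∈ s, c i * f i (x, a, b))
      (∑ i ∈ s, c i * pt (f i) (t, a, b)) t :=
    HasDerivAt.fun_sum (fun i hi => (hdt (hf i hi) t a b).const_mul (c i))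
  exact h.deriv

/-- pt (M v) = (1/k) pt v + M (pt v) -/
lemma pt_M {k : ℕ} {v : E3 → ℝ} (hv : ContDiff ℝ (⊤ : ℕ∞) v) (p : E3) :
    pt (M k v) p = (1 / (k:ℝ)) * pt v p + M k (pt v) p := by
  obtain ⟨t, a, b⟩ := p
  have h : HasDerivAt (fun s => (s / (k:ℝ)) * pt v (s, a, b))
      ((1 / (k:ℝ)) * pt v (t, a, b) + (t / (k:ℝ)) * pt (pt v) (t, a, b)) t := by
    have h1 : HasDerivAt (fun s : ℝ => s / (k:ℝ)) (1 / (k:ℝ)) t := by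
      simpa using (hasDerivAt_id t).div_const (k:ℝ)
    exact h1.mul (hdt (contDiff_pt hv) t a b)
  have : pt (M k v) (t, a, b) = (1 / (k:ℝ)) * pt v (t, a, b) + (t / (k:ℝ)) * pt (pt v) (t, a, b) := by
    exact h.deriv
  simpa [M] using this

lemma pt_Rop_comm {u : E3 → ℝ} (hu : ContDiff ℝ (⊤ : ℕ∞) u) (p : E3) :
    pt (Rop u) p = Rop (pt u) p := by
  obtain ⟨t, a, b⟩ := p
  have h : HasDerivAt (fun s => a * px1 u (s, a, b) + b * px2 u (s, a, b))
      (a * pt (px1 u) (t, a, b) + b * pt (px2 u) (t, a, b)) t :=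
    ((hdt (contDiff_px1 hu) t a b).const_mul a).add ((hdt (contDiff_px2 hu) t a b).const_mul b)
  have h2 : pt (Rop u) (t, a, b) = a * pt (px1 u) (t, a, b) + b * pt (px2 u) (t, a, b) := h.deriv
  rw [h2, pt_px1_comm hu, pt_px2_comm hu]
  rfl

lemma pt_Rop_iter_comm {u : E3 → ℝ} (hu : ContDiff ℝ (⊤ : ℕ∞) u) (n : ℕ) (p : E3) :
    pt (Rop^[n] u) p = Rop^[n] (pt u) p := by
  induction n generalizing p with
  | zero => rfl
  | succ n ih =>
    rw [Function.iterate_succ_apply', Function.iterate_succ_apply',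
        pt_Rop_comm (contDiff_Rop_iter hu n) p]
    have hfun : pt (Rop^[n] u) = Rop^[n] (pt u) := funext ih
    rw [← hfun]

/-- the binomial commutation of pt with iterates of M -/
lemma pt_M_iter {k : ℕ} {v : E3 → ℝ} (hv : ContDiff ℝ (⊤ : ℕ∞) v) (n : ℕ) (p : E3) :
    pt ((M k)^[n] v) p
      = ∑ i ∈ Finset.range (n+1), ((n.choose i : ℝ) * (1/(k:ℝ))^(n-i)) * ((M k)^[i] (pt v) p) := by
  induction n generalizing p with
  | zero => simp
  | succ n ih =>
    have hMn := contDiff_M_iter (k := k) hv n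
    rw [Function.iterate_succ_apply', pt_M hMn p]
    have hfun : pt ((M k)^[n] v)
        = fun q => ∑ i ∈ Finset.range (n+1), ((n.choose i : ℝ) * (1/(k:ℝ))^(n-i)) * ((M k)^[i] (pt v) q) :=
      funext ih
    have hMpt : M k (pt ((M k)^[n] v)) p
        = ∑ i ∈ Finset.range (n+1), ((n.choose i : ℝ) * (1/(k:ℝ))^(n-i)) * ((M k)^[i+1] (pt v) p) := by
      rw [hfun]
      show (p.1 / (k:ℝ)) * pt (fun q => ∑ i ∈ Finset.range (n+1), _ * _) p = _
      rw [pt_sum _ _ _ (fun i _ => contDiff_M_iter (contDiff_pt hv) i) p, Finset.mul_sum]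
      apply Finset.sum_congr rfl
      intro i _
      rw [Function.iterate_succ_apply']
      show _ = _ * ((p.1 / (k:ℝ)) * pt ((M k)^[i] (pt v)) p)
      ring
    rw [ih p, hMpt, Finset.mul_sum]
    -- now pure algebra with binomial coefficients
    set y : ℝ := 1/(k:ℝ)
    rw [Finset.sum_range_succ' (fun i => ((n+1).choose i : ℝ) * y^(n+1-i) * (M k)^[i] (pt v) p) (n+1)]
    have hshift : ∑ i ∈ Finset.range (n+1), (((n+1).choose (i+1) : ℝ) * y^(n+1-(i+1)) * (M k)^[i+1] (pt v) p)
        = ∑ i ∈ Finset.range (n+1), ((n.choose i : ℝ) * y^(n-i) * (M k)^[i+1] (pt v) p)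
          + ∑ i ∈ Finset.range (n+1), ((n.choose (i+1) : ℝ) * y^(n-i) * (M k)^[i+1] (pt v) p) := by
      rw [← Finset.sum_add_distrib]
      apply Finset.sum_congr rfl
      intro i hi
      simp only [Finset.mem_range] at hi
      rw [Nat.choose_succ_succ]
      push_cast
      ring
    have hlast : ∑ i ∈ Finset.range (n+1), ((n.choose (i+1) : ℝ) * y^(n-i) * (M k)^[i+1] (pt v) p)
        = ∑ i ∈ Finset.range n, ((n.choose (i+1) : ℝ) * y^(n-i) * (M k)^[i+1] (pt v) p) := by
      rw [Finset.sum_range_succ]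
      simp
    have hmul : ∑ i ∈ Finset.range (n+1), y * ((n.choose i : ℝ) * y^(n-i) * (M k)^[i] (pt v) p)
        = ∑ i ∈ Finset.range n, ((n.choose (i+1) : ℝ) * y^(n-i) * (M k)^[i+1] (pt v) p) + y^(n+1) * (M k)^[0] (pt v) p := by
      rw [Finset.sum_range_succ' (fun i => y * ((n.choose i : ℝ) * y^(n-i) * (M k)^[i] (pt v) p)) n]
      congr 1
      · apply Finset.sum_congr rfl
        intro i hi
        simp only [Finset.mem_range] at hi
        rw [show n - i = (n - (i+1)) + 1 from by omega]
        ring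
      · rw [Nat.choose_zero_right, Nat.sub_zero]
        push_cast
        ring
    rw [hshift, hlast, hmul, Nat.choose_zero_right, Nat.sub_zero]
    push_cast
    ring

def Acoef (k j i : ℕ) : ℝ := ∑ j' ∈ Finset.range (j+1),
  ((bernCoef j j' : ℝ)/(j'.factorial:ℝ)) * (j'.choose i) * (1/(k:ℝ))^(j'-i)

lemma KEYRA (k : ℕ) (hk : 2 ≤ k) (m i : ℕ) (hm : 1 ≤ m) (hi : i ≤ m) :
    Acoef k m i - (bernCoef m i : ℝ) / (i.factorial:ℝ)
    = -∑ ℓ ∈ Finset.range m, del k ℓ * Acoef k (m-1-ℓ) i := by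
  have h := KEYR k hk m i hm hi
  rw [show (∑ ℓ ∈ Finset.range m, del k ℓ * Acoef k (m-1-ℓ) i)
      = ∑ ℓ ∈ Finset.range m, del k ℓ * ∑ j' ∈ Finset.range (m-ℓ),
          ((bernCoef (m-1-ℓ) j' : ℝ)/(j'.factorial:ℝ)) * ((j'.choose i):ℝ) * (1/(k:ℝ))^(j'-i)
    from Finset.sum_congr rfl (fun ℓ hℓ => by
      simp only [Finset.mem_range] at hℓ
      rw [Acoef, show m-1-ℓ+1 = m-ℓ from by omega])]
  exact h

lemma contDiff_Nop {k : ℕ} {v : E3 → ℝ} (hv : ContDiff ℝ (⊤ : ℕ∞) v) (j : ℕ) :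
    ContDiff ℝ (⊤ : ℕ∞) (Nop k j v) := by
  apply ContDiff.sum
  intro i _
  exact contDiff_const.mul (contDiff_M_iter hv i)

lemma Acoef_eq_zero {k j i : ℕ} (h : j < i) : Acoef k j i = 0 := by
  apply Finset.sum_eq_zero
  intro j' hj'
  simp only [Finset.mem_range] at hj'
  rw [Nat.choose_eq_zero_of_lt (by omega)]
  simp

lemma pt_Nop {k : ℕ} {v : E3 → ℝ} (hv : ContDiff ℝ (⊤ : ℕ∞) v) (j : ℕ) (p : E3) :
    pt (Nop k j v) p
      = ∑ i ∈ Finset.range (j+1), Acoef k j i * ((M k)^[i] (pt v) p) := by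
  have h1 : pt (Nop k j v) p
      = ∑ j' ∈ Finset.range (j+1),
          ((bernCoef j j' : ℝ) / (j'.factorial : ℝ)) * pt ((M k)^[j'] v) p := by
    exact pt_sum (Finset.range (j+1)) _ _ (fun i _ => contDiff_M_iter hv i) p
  rw [h1]
  have h2 : ∀ j' ∈ Finset.range (j+1),
      ((bernCoef j j' : ℝ) / (j'.factorial : ℝ)) * pt ((M k)^[j'] v) p
      = ∑ i ∈ Finset.range (j+1),
          ((bernCoef j j' : ℝ)/(j'.factorial:ℝ)) * (j'.choose i) * (1/(k:ℝ))^(j'-i)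
            * ((M k)^[i] (pt v) p) := by
    intro j' hj'
    simp only [Finset.mem_range] at hj'
    rw [pt_M_iter hv j' p, Finset.mul_sum]
    have hsub : Finset.range (j'+1) ⊆ Finset.range (j+1) := by
      apply Finset.range_subset_range.mpr; omega
    rw [← Finset.sum_subset hsub]
    · apply Finset.sum_congr rfl
      intro i _
      ring
    · intro i hi hni
      simp only [Finset.mem_range] at hi hni
      rw [Nat.choose_eq_zero_of_lt (by omega)]
      simp
  rw [Finset.sum_congr rfl h2, Finset.sum_comm]
  apply Finset.sum_congr rfl
  intro i _
  rw [Acoef, Finset.sum_mul]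

lemma KEY {k : ℕ} (hk : 2 ≤ k) {v : E3 → ℝ} (hv : ContDiff ℝ (⊤ : ℕ∞) v) (m : ℕ) (hm : 1 ≤ m) (p : E3) :
    pt (Nop k m v) p - Nop k m (pt v) p
      = -∑ ℓ ∈ Finset.range m, del k ℓ * pt (Nop k (m-1-ℓ) v) p := by
  have hR : ∀ ℓ ∈ Finset.range m, pt (Nop k (m-1-ℓ) v) p
      = ∑ i ∈ Finset.range (m+1), Acoef k (m-1-ℓ) i * ((M k)^[i] (pt v) p) := by
    intro ℓ hℓ
    simp only [Finset.mem_range] at hℓ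
    rw [pt_Nop hv (m-1-ℓ) p]
    apply Finset.sum_subset (Finset.range_subset_range.mpr (by omega))
    intro i hi hni
    simp only [Finset.mem_range] at hi hni
    rw [Acoef_eq_zero (by omega)]
    simp
  rw [pt_Nop hv m p]
  have hNop : Nop k m (pt v) p = ∑ i ∈ Finset.range (m+1),
      ((bernCoef m i : ℝ) / (i.factorial : ℝ)) * ((M k)^[i] (pt v) p) := rfl
  rw [hNop, ← Finset.sum_sub_distrib]
  have hRsum : ∑ ℓ ∈ Finset.range m, del k ℓ * pt (Nop k (m-1-ℓ) v) p
      = ∑ i ∈ Finset.range (m+1),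
          (∑ ℓ ∈ Finset.range m, del k ℓ * Acoef k (m-1-ℓ) i) * ((M k)^[i] (pt v) p) := by
    rw [Finset.sum_congr rfl (fun ℓ hℓ => by rw [hR ℓ hℓ, Finset.mul_sum]), Finset.sum_comm]
    apply Finset.sum_congr rfl
    intro i _
    rw [Finset.sum_mul]
    apply Finset.sum_congr rfl
    intro ℓ _
    ring
  rw [hRsum, ← Finset.sum_neg_distrib]
  apply Finset.sum_congr rfl
  intro i hi
  simp only [Finset.mem_range] at hi
  have hkr := KEYRA k hk m i hm (by omega)
  linear_combination ((M k)^[i] (pt v) p) * hkr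

def TC (f : E3 → ℝ) : Prop := ∀ t t' x₁ x₂ : ℝ, f (t, x₁, x₂) = f (t', x₁, x₂)

lemma TC_px1 {f : E3 → ℝ} (h : TC f) : TC (px1 f) := by
  intro t t' x₁ x₂
  show deriv (fun s => f (t, s, x₂)) x₁ = deriv (fun s => f (t', s, x₂)) x₁
  congr 1
  funext s
  exact h t t' s x₂

lemma TC_px2 {f : E3 → ℝ} (h : TC f) : TC (px2 f) := by
  intro t t' x₁ x₂
  show deriv (fun s => f (t, x₁, s)) x₂ = deriv (fun s => f (t', x₁, s)) x₂
  congr 1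
  funext s
  exact h t t' x₁ s

lemma TC_Rop {f : E3 → ℝ} (h : TC f) : TC (Rop f) := by
  intro t t' x₁ x₂
  show x₁ * px1 f (t, x₁, x₂) + x₂ * px2 f (t, x₁, x₂)
      = x₁ * px1 f (t', x₁, x₂) + x₂ * px2 f (t', x₁, x₂)
  rw [TC_px1 h t t' x₁ x₂, TC_px2 h t t' x₁ x₂]

lemma TC_Rop_iter {f : E3 → ℝ} (h : TC f) (n : ℕ) : TC (Rop^[n] f) := by
  induction n with
  | zero => exact h
  | succ n ih => rw [Function.iterate_succ_apply']; exact TC_Rop ih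

lemma TC_const_mul {f : E3 → ℝ} (h : TC f) (c : ℝ) : TC (fun q => c * f q) := by
  intro t t' x₁ x₂
  simp only
  rw [h t t' x₁ x₂]

lemma pt_sum_mul {ι : Type*} (s : Finset ι) (f g : ι → E3 → ℝ)
    (hf : ∀ i ∈ s, TC (f i)) (hg : ∀ i ∈ s, ContDiff ℝ (⊤ : ℕ∞) (g i)) (p : E3) :
    pt (fun q => ∑ i ∈ s, f i q * g i q) p = ∑ i ∈ s, f i p * pt (g i) p := by
  obtain ⟨t, a, b⟩ := p
  have hsect : (fun s' : ℝ => ∑ i ∈ s, f i (s', a, b) * g i (s', a, b))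
      = fun s' : ℝ => ∑ i ∈ s, f i (t, a, b) * g i (s', a, b) := by
    funext s'
    exact Finset.sum_congr rfl (fun i hi => by rw [hf i hi s' t a b])
  have h : HasDerivAt (fun s' : ℝ => ∑ i ∈ s, f i (s', a, b) * g i (s', a, b))
      (∑ i ∈ s, f i (t, a, b) * pt (g i) (t, a, b)) t := by
    rw [hsect]
    exact HasDerivAt.fun_sum (fun i hi => (hdt (hg i hi) t a b).const_mul (f i (t, a, b)))
  exact h.deriv

lemma bernCoef_zero : bernCoef 0 0 = 1 := by
  simp [bernCoef, bernoulliPowerSeries, PowerSeries.coeff_mk]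

lemma Nop_zero {k : ℕ} (v : E3 → ℝ) : Nop k 0 v = v := by
  funext q
  show (∑ j' ∈ Finset.range 1, ((bernCoef 0 j' : ℝ) / (Nat.factorial j' : ℝ)) * ((M k)^[j'] v q)) = v q
  rw [Finset.sum_range_one, bernCoef_zero]
  simp



theorem main (k : ℕ) (hk : 2 ≤ k) (φ : E3 → ℝ)
    (hφ : ContDiff ℝ (⊤ : ℕ∞) φ)
    (hconst : ∀ t t' x₁ x₂ : ℝ, φ (t, x₁, x₂) = φ (t', x₁, x₂))
    (p : ℕ) (hp : 1 ≤ p) :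
    ∀ u : E3 → ℝ, ContDiff ℝ (⊤ : ℕ∞) u → ∀ q : E3,
        X1 (RpLoc k p φ u) q - RpLoc k p φ (X1 u) q
          = - X1 (fun q' => ∑ ℓ ∈ Finset.range p,
              del k ℓ * RpLoc k (p - ℓ - 1) (Rop^[ℓ + 1] φ) u q') q := by
  intro u hu q
  have hTC : TC φ := hconst
  have hTCj : ∀ j, TC (Rop^[j] φ) := TC_Rop_iter hTC
  have hvj : ∀ j : ℕ, ContDiff ℝ (⊤ : ℕ∞) (Rop^[j] u) := contDiff_Rop_iter hu
  have hL1 : X1 (RpLoc k p φ u) q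
      = ∑ j ∈ Finset.range (p+1), Rop^[j] φ q * pt (Nop k j (Rop^[p-j] u)) q :=
    pt_sum_mul (Finset.range (p+1)) (fun j => Rop^[j] φ) (fun j => Nop k j (Rop^[p-j] u))
      (fun j _ => hTCj j) (fun j _ => contDiff_Nop (hvj (p-j)) j) q
  have hL2 : RpLoc k p φ (X1 u) q
      = ∑ j ∈ Finset.range (p+1), Rop^[j] φ q * Nop k j (pt (Rop^[p-j] u)) q := by
    apply Finset.sum_congr rfl
    intro j _
    have he : Rop^[p-j] (X1 u) = pt (Rop^[p-j] u) :=
      funext (fun r => (pt_Rop_iter_comm hu (p-j) r).symm)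
    rw [show Nop k j (Rop^[p-j] (X1 u)) q = Nop k j (pt (Rop^[p-j] u)) q from by rw [he]]
  have hdiff : X1 (RpLoc k p φ u) q - RpLoc k p φ (X1 u) q
      = ∑ j ∈ Finset.range (p+1), Rop^[j] φ q *
          (pt (Nop k j (Rop^[p-j] u)) q - Nop k j (pt (Rop^[p-j] u)) q) := by
    rw [hL1, hL2, ← Finset.sum_sub_distrib]
    exact Finset.sum_congr rfl (fun j _ => by ring)
  rw [hdiff, Finset.sum_range_succ'
    (fun j => Rop^[j] φ q * (pt (Nop k j (Rop^[p-j] u)) q - Nop k j (pt (Rop^[p-j] u)) q)) p]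
  have h0 : Rop^[0] φ q *
      (pt (Nop k 0 (Rop^[p-0] u)) q - Nop k 0 (pt (Rop^[p-0] u)) q) = 0 := by
    rw [Nop_zero, Nop_zero, sub_self, mul_zero]
  rw [h0, add_zero]
  have hKEYj : ∀ j ∈ Finset.range p,
      Rop^[j+1] φ q * (pt (Nop k (j+1) (Rop^[p-(j+1)] u)) q - Nop k (j+1) (pt (Rop^[p-(j+1)] u)) q)
      = Rop^[j+1] φ q *
          (-∑ ℓ ∈ Finset.range (j+1), del k ℓ * pt (Nop k (j-ℓ) (Rop^[p-1-j] u)) q) := by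
    intro j hj
    simp only [Finset.mem_range] at hj
    congr 1
    rw [KEY hk (hvj (p-(j+1))) (j+1) (by omega) q]
    congr 1
    apply Finset.sum_congr rfl
    intro ℓ hℓ
    rw [show j+1-1-ℓ = j-ℓ from by omega, show p-(j+1) = p-1-j from by omega]
  rw [Finset.sum_congr rfl hKEYj]
  -- left side as a sigma sum
  have hLfin : ∑ j ∈ Finset.range p, Rop^[j+1] φ q *
        (-∑ ℓ ∈ Finset.range (j+1), del k ℓ * pt (Nop k (j-ℓ) (Rop^[p-1-j] u)) q)
      = -∑ z ∈ (Finset.range p).sigma (fun j => Finset.range (j+1)),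
          (del k z.2 * Rop^[z.1+1] φ q) * pt (Nop k (z.1-z.2) (Rop^[p-1-z.1] u)) q := by
    have h1 : ∀ j ∈ Finset.range p, Rop^[j+1] φ q *
        (-∑ ℓ ∈ Finset.range (j+1), del k ℓ * pt (Nop k (j-ℓ) (Rop^[p-1-j] u)) q)
        = -∑ ℓ ∈ Finset.range (j+1),
            (del k ℓ * Rop^[j+1] φ q) * pt (Nop k (j-ℓ) (Rop^[p-1-j] u)) q := by
      intro j _
      rw [mul_neg, Finset.mul_sum]
      congr 1
      exact Finset.sum_congr rfl (fun ℓ _ => by ring)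
    rw [Finset.sum_congr rfl h1, Finset.sum_neg_distrib, Finset.sum_sigma']
  rw [hLfin]
  -- right side as a sigma sum
  have hFsig : (fun q' => ∑ ℓ ∈ Finset.range p,
        del k ℓ * RpLoc k (p - ℓ - 1) (Rop^[ℓ + 1] φ) u q')
      = fun q' => ∑ z ∈ (Finset.range p).sigma (fun ℓ => Finset.range (p-ℓ)),
          (del k z.1 * Rop^[z.2] (Rop^[z.1+1] φ) q') * Nop k z.2 (Rop^[p-z.1-1-z.2] u) q' := by
    funext q'
    have hstep : ∀ ℓ ∈ Finset.range p, del k ℓ * RpLoc k (p-ℓ-1) (Rop^[ℓ+1] φ) u q'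
        = ∑ j ∈ Finset.range (p-ℓ),
            (del k ℓ * Rop^[j] (Rop^[ℓ+1] φ) q') * Nop k j (Rop^[p-ℓ-1-j] u) q' := by
      intro ℓ hℓ
      simp only [Finset.mem_range] at hℓ
      simp only [RpLoc]
      rw [show p-ℓ-1+1 = p-ℓ from by omega, Finset.mul_sum]
      exact Finset.sum_congr rfl (fun j _ => by ring)
    rw [Finset.sum_congr rfl hstep, Finset.sum_sigma']
  have hXF : X1 (fun q' => ∑ ℓ ∈ Finset.range p,
        del k ℓ * RpLoc k (p - ℓ - 1) (Rop^[ℓ + 1] φ) u q') q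
      = ∑ z ∈ (Finset.range p).sigma (fun ℓ => Finset.range (p-ℓ)),
          (del k z.1 * Rop^[z.2] (Rop^[z.1+1] φ) q) * pt (Nop k z.2 (Rop^[p-z.1-1-z.2] u)) q := by
    show pt _ q = _
    rw [hFsig]
    exact pt_sum_mul ((Finset.range p).sigma (fun ℓ => Finset.range (p-ℓ)))
      (fun z => fun q' => del k z.1 * Rop^[z.2] (Rop^[z.1+1] φ) q')
      (fun z => Nop k z.2 (Rop^[p-z.1-1-z.2] u))
      (fun z _ => TC_const_mul (TC_Rop_iter (hTCj (z.1+1)) z.2) _)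
      (fun z _ => contDiff_Nop (hvj _) _) q
  rw [hXF, neg_inj]
  -- the bijection
  apply Finset.sum_nbij' (i := fun z : (_ : ℕ) × ℕ => (⟨z.2, z.1 - z.2⟩ : (_ : ℕ) × ℕ))
    (j := fun z : (_ : ℕ) × ℕ => (⟨z.1 + z.2, z.1⟩ : (_ : ℕ) × ℕ))
  · rintro ⟨a, b⟩ hz
    simp only [Finset.mem_sigma, Finset.mem_range] at hz ⊢
    omega
  · rintro ⟨a, b⟩ hz
    simp only [Finset.mem_sigma, Finset.mem_range] at hz ⊢
    omega
  · rintro ⟨a, b⟩ hz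
    simp only [Finset.mem_sigma, Finset.mem_range] at hz
    rw [show b + (a - b) = a from by omega]
  · rintro ⟨a, b⟩ hz
    simp only [Finset.mem_sigma, Finset.mem_range] at hz
    rw [show a + b - a = b from by omega]
  · rintro ⟨a, b⟩ hz
    simp only [Finset.mem_sigma, Finset.mem_range] at hz
    have hrw : Rop^[a-b] (Rop^[b+1] φ) = Rop^[a+1] φ := by
      rw [← Function.iterate_add_apply]
      congr 1
      omega
    simp only
    rw [hrw, show p - b - 1 - (a - b) = p - 1 - a from by omega]


end BX
end
end Auxiliary

/-- For every `p ≥ 1` there exist reals `δ_0, …, δ_{p-1}` with `|δ_ℓ| ≤ 1` such that,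
for `φ` smooth, independent of `t` and radial, and every smooth `u`:
`[X₁, R^p_φ] u = -X₁(Σ_{ℓ=0}^{p-1} δ_ℓ · R^{p-ℓ-1}_{φ^{(ℓ+1)}} u)` pointwise. -/
theorem bracket_X1_RpLoc (k : ℕ) (hk : 2 ≤ k) (φ : ℝ × ℝ × ℝ → ℝ)
    (hφ : ContDiff ℝ (⊤ : ℕ∞) φ)
    (hconst : ∀ t t' x₁ x₂ : ℝ, φ (t, x₁, x₂) = φ (t', x₁, x₂))
    (hrad : ∀ q : ℝ × ℝ × ℝ, q.2.1 * px2 φ q - q.2.2 * px1 φ q = 0)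
    (p : ℕ) (hp : 1 ≤ p) :
    ∃ δ : ℕ → ℝ, (∀ ℓ < p, |δ ℓ| ≤ 1) ∧
      ∀ u : ℝ × ℝ × ℝ → ℝ, ContDiff ℝ (⊤ : ℕ∞) u → ∀ q : ℝ × ℝ × ℝ,
        X1 (RpLoc k p φ u) q - RpLoc k p φ (X1 u) q
          = - X1 (fun q' => ∑ ℓ ∈ Finset.range p,
              δ ℓ * RpLoc k (p - ℓ - 1) (Rop^[ℓ + 1] φ) u q') q := by
  refine ⟨BX.del k, fun ℓ _ => BX.del_abs_le k hk ℓ, ?_⟩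
  exact BX.main k hk φ hφ hconst p hp
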